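/- Let n be a finite index type, let a be an arbitrary complex n×n matrix with entries a_{ik}, let d : n → ℝ, and let ρ = diagonal(d) be the real diagonal matrix with entries d_i (regarded as a complex matrix). Then tr(ρ·(Δρ)) = ∑_{i,k} |a_{ik}|²·(d_i·d_k - d_k²), where Δρ = aρa* - (1/2)a*aρ - (1/2)ρa*a. (Identity (3.4) for the alternative dissipation operator Δ, showing that the resulting quadratic form is not manifestly nonpositive.) -/

import Mathlib

/-!
By cyclicity of the trace, both halves of the anticommutator in `Δρ` contribute `tr(ρ²a*a)`, so
`tr(ρΔρ) = tr(ρaρa*) - tr(ρ²a*a)`. For `ρ = diagonal(d)` the first term is `∑ᵢₖ dᵢdₖ|aᵢₖ|²` and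
the second is `∑ₖ dₖ²(a*a)ₖₖ = ∑ᵢₖ dₖ²|aᵢₖ|²`.
-/

open Matrix

/-- The alternative dissipation operator `Δ` of Quantum Optics (matrix version):
`Δρ = aρa* - ½a*aρ - ½ρa*a`. -/
noncomputable def dissDelta {n : Type*} [Fintype n] [DecidableEq n] (a ρ : Matrix n n ℂ) : Matrix n n ℂ :=
  a * ρ * aᴴ - (1/2 : ℂ) • (aᴴ * a * ρ) - (1/2 : ℂ) • (ρ * (aᴴ * a))

namespace Matrix

variable {n R : Type*} [Fintype n] [DecidableEq n] [CommSemiring R] [Star R]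

theorem trace_diagonal_mul_mul_diagonal_mul_conjTranspose (d e : n → R) (a : Matrix n n R) :
    (diagonal d * a * diagonal e * aᴴ).trace = ∑ i, ∑ k, d i * e k * (a i k * star (a i k)) := by
  simp only [trace, diag_apply, mul_apply (M := diagonal d * a * diagonal e)]
  simp only [mul_diagonal, diagonal_mul, conjTranspose_apply]
  refine Finset.sum_congr rfl fun i _ => Finset.sum_congr rfl fun k _ => ?_
  ring

theorem trace_diagonal_mul_conjTranspose_mul (e : n → R) (a : Matrix n n R) :
    (diagonal e * aᴴ * a).trace = ∑ i, ∑ k, e k * (star (a i k) * a i k) := by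
  simp only [trace, diag_apply, Matrix.mul_assoc, diagonal_mul]
  simp only [mul_apply, conjTranspose_apply, Finset.mul_sum]
  rw [Finset.sum_comm]

end Matrix

theorem trace_mul_dissDelta {n : Type*} [Fintype n] [DecidableEq n] (a ρ : Matrix n n ℂ) :
    (ρ * dissDelta a ρ).trace = (ρ * a * ρ * aᴴ).trace - (ρ * ρ * aᴴ * a).trace := by
  have hcycle : (ρ * aᴴ * a * ρ).trace = (ρ * ρ * aᴴ * a).trace := by
    rw [trace_mul_comm]
    simp only [Matrix.mul_assoc]
  simp only [dissDelta, Matrix.mul_sub, Matrix.mul_smul, trace_sub, trace_smul, smul_eq_mul,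
    ← Matrix.mul_assoc, hcycle]
  ring

/-- Identity (3.4): for `ρ = diagonal d` with real `d`,
`tr(ρ·Δρ) = ∑ᵢₖ |aᵢₖ|²(dᵢdₖ - dₖ²)`. -/
theorem trace_mul_dissDelta_diag_eq
    {n : Type*} [Fintype n] [DecidableEq n]
    (a : Matrix n n ℂ) (d : n → ℝ) (ρ : Matrix n n ℂ)
    (hρ : ρ = Matrix.diagonal (fun i => (d i : ℂ))) :
    (ρ * dissDelta a ρ).trace
      = ((∑ i, ∑ k, ‖a i k‖ ^ 2 * (d i * d k - d k ^ 2) : ℝ) : ℂ) := by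
  subst hρ
  rw [trace_mul_dissDelta, diagonal_mul_diagonal, trace_diagonal_mul_mul_diagonal_mul_conjTranspose,
    trace_diagonal_mul_conjTranspose_mul, ← Finset.sum_sub_distrib]
  push_cast
  refine Finset.sum_congr rfl fun i _ => ?_
  rw [← Finset.sum_sub_distrib]
  refine Finset.sum_congr rfl fun k _ => ?_
  rw [Complex.star_def, Complex.mul_conj', Complex.conj_mul']
  ring
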